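/- Let N ≥ 1, M > 0, x, y ∈ ℝ^N with all components in [0, M], let 0 < δ < M, let F : K_x → K_y satisfy |d²(p,q) − d²(F(p), F(q))| ≤ 2δ for all p, q ∈ K_x, and let σ, τ : {1,…,N} → {1,…,N} satisfy F(□(n)) ⊆ □(σ(n)) and F(p_n^+(x)), F(p_n^−(x)) ∈ {p_{τ(n)}^+(y), p_{τ(n)}^−(y)} for all n. Then τ(n) ∈ {σ(n), σ(n) + 1} for every n ∈ {1,…,N}. -/

import Mathlib

/-!
Compare `p_n^+(x)` with the midpoint `c` of the left edge of `□(n)`: they are `4M` apart, so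
`F(p_n^+(x))` and `F(c)` are less than `4M + 2δ < 6M` apart. The first lies on the vertical line
at abscissa `10M τ(n)`, the second in the strip `[4M + 10M σ(n), 6M + 10M σ(n)]`, and a gap
below `6M` between these abscissae forces `τ(n) ∈ {σ(n), σ(n) + 1}`.
-/

noncomputable def box (M : ℝ) (n : ℕ) : Set (ℝ × ℝ) :=
  Set.Icc (4 * M + 10 * M * (n : ℝ)) (4 * M + 10 * M * (n : ℝ) + 2 * M) ×ˢ Set.Icc (-M) M

noncomputable def pp {N : ℕ} (M : ℝ) (z : Fin N → ℝ) (n : Fin N) : ℝ × ℝ :=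
  (10 * M * ((n : ℕ) : ℝ), z n)

noncomputable def pm {N : ℕ} (M : ℝ) (z : Fin N → ℝ) (n : Fin N) : ℝ × ℝ :=
  (10 * M * ((n : ℕ) : ℝ), -(z n))

noncomputable def Kset {N : ℕ} (M : ℝ) (z : Fin N → ℝ) : Set (ℝ × ℝ) :=
  ⋃ n : Fin N, ({pp M z n, pm M z n} ∪ box M n)

theorem pp_mem {N : ℕ} (M : ℝ) (z : Fin N → ℝ) (n : Fin N) : pp M z n ∈ Kset M z :=
  Set.mem_iUnion.mpr ⟨n, Or.inl (Set.mem_insert _ _)⟩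

theorem pm_mem {N : ℕ} (M : ℝ) (z : Fin N → ℝ) (n : Fin N) : pm M z n ∈ Kset M z :=
  Set.mem_iUnion.mpr ⟨n, Or.inl (Set.mem_insert_of_mem _ rfl)⟩

theorem Kset_compact {N : ℕ} (M : ℝ) (z : Fin N → ℝ) : IsCompact (Kset M z) := by
  apply isCompact_iUnion
  intro n
  exact ((Set.toFinite _).isCompact).union (isCompact_Icc.prod isCompact_Icc)

instance {N : ℕ} (M : ℝ) (z : Fin N → ℝ) : CompactSpace ↥(Kset M z) :=
  isCompact_iff_compactSpace.mp (Kset_compact M z)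

theorem Kset_nonempty {N : ℕ} (hN : 0 < N) (M : ℝ) (z : Fin N → ℝ) : (Kset M z).Nonempty :=
  ⟨pp M z ⟨0, hN⟩, pp_mem M z ⟨0, hN⟩⟩

noncomputable def boxLeftMid (M : ℝ) (n : ℕ) : ℝ × ℝ :=
  (4 * M + 10 * M * (n : ℝ), 0)

theorem boxLeftMid_mem_box {M : ℝ} (hM : 0 ≤ M) (n : ℕ) : boxLeftMid M n ∈ box M n :=
  ⟨⟨le_rfl, le_add_of_nonneg_right (by positivity)⟩, neg_nonpos.mpr hM, hM⟩

theorem boxLeftMid_mem_Kset {N : ℕ} {M : ℝ} (hM : 0 ≤ M) (z : Fin N → ℝ) (n : Fin N) :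
    boxLeftMid M n ∈ Kset M z :=
  Set.mem_iUnion.mpr ⟨n, Or.inr (boxLeftMid_mem_box hM n)⟩

theorem dist_pp_boxLeftMid_le {N : ℕ} {M : ℝ} (hM : 0 ≤ M) (z : Fin N → ℝ) (n : Fin N)
    (hz : |z n| ≤ M) : dist (pp M z n) (boxLeftMid M n) ≤ 4 * M := by
  rw [Prod.dist_eq, Real.dist_eq, Real.dist_eq]
  simp only [pp, boxLeftMid, sub_add_cancel_right, abs_neg, sub_zero,
    abs_of_nonneg (by positivity : 0 ≤ 4 * M)]
  exact max_le le_rfl (by linarith)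

theorem fst_eq_of_mem_pp_pm {N : ℕ} {M : ℝ} {z : Fin N → ℝ} {k : Fin N} {a : ℝ × ℝ}
    (ha : a ∈ ({pp M z k, pm M z k} : Set (ℝ × ℝ))) : a.1 = 10 * M * ((k : ℕ) : ℝ) := by
  rcases ha with rfl | rfl <;> rfl

theorem abs_fst_sub_fst_le_dist (a b : ℝ × ℝ) : |a.1 - b.1| ≤ dist a b := by
  rw [Prod.dist_eq, ← Real.dist_eq]
  exact le_max_left _ _

theorem eq_or_eq_succ_of_abs_sub_lt {M b : ℝ} (hM : 0 < M) {t s : ℕ}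
    (hb : b ∈ Set.Icc (4 * M + 10 * M * (s : ℝ)) (4 * M + 10 * M * (s : ℝ) + 2 * M))
    (h : |10 * M * (t : ℝ) - b| < 6 * M) : t = s ∨ t = s + 1 := by
  obtain ⟨hb₁, hb₂⟩ := hb
  obtain ⟨h₁, h₂⟩ := abs_lt.mp h
  have ht : (t : ℝ) < s + 2 := by nlinarith
  have hs : (s : ℝ) < t + 1 := by nlinarith
  have ht' : t < s + 2 := by exact_mod_cast ht
  have hs' : s < t + 1 := by exact_mod_cast hs
  omega

theorem step6_tau_mem_general {N : ℕ} {M : ℝ} (hM : 0 < M)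
    (x y : Fin N → ℝ) (hx : ∀ n, x n ∈ Set.Icc (0 : ℝ) M)
    {δ : ℝ} (hδM : δ < M)
    (F : ↥(Kset M x) → ↥(Kset M y))
    (hF : ∀ p q : ↥(Kset M x), |dist p q - dist (F p) (F q)| ≤ 2 * δ)
    (σ : Fin N → Fin N)
    (hσ : ∀ n : Fin N, ∀ p : ↥(Kset M x),
      (p : ℝ × ℝ) ∈ box M n → (F p : ℝ × ℝ) ∈ box M (σ n))
    (τ : Fin N → Fin N)
    (hτ : ∀ n : Fin N,
      (F ⟨pp M x n, pp_mem M x n⟩ : ℝ × ℝ) ∈ ({pp M y (τ n), pm M y (τ n)} : Set (ℝ × ℝ)) ∧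
      (F ⟨pm M x n, pm_mem M x n⟩ : ℝ × ℝ) ∈ ({pp M y (τ n), pm M y (τ n)} : Set (ℝ × ℝ))) :
    ∀ n : Fin N, (τ n : ℕ) = (σ n : ℕ) ∨ (τ n : ℕ) = (σ n : ℕ) + 1 := by
  intro n
  let P : ↥(Kset M x) := ⟨pp M x n, pp_mem M x n⟩
  let Q : ↥(Kset M x) := ⟨boxLeftMid M n, boxLeftMid_mem_Kset hM.le x n⟩
  have hPQ : dist P Q ≤ 4 * M :=
    dist_pp_boxLeftMid_le hM.le x n (abs_le.mpr ⟨by linarith [(hx n).1], (hx n).2⟩)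
  have hFPQ : dist (F P) (F Q) < 6 * M := by linarith [(abs_le.mp (hF P Q)).1]
  refine eq_or_eq_succ_of_abs_sub_lt hM (hσ n Q (boxLeftMid_mem_box hM.le n)).1 ?_
  rw [← fst_eq_of_mem_pp_pm (hτ n).1]
  exact (abs_fst_sub_fst_le_dist _ _).trans_lt hFPQ

/-- Step 6: `τ(n) ∈ {σ(n), σ(n) + 1}` for every `n`. -/
theorem step6_tau_mem {N : ℕ} (hN : 0 < N) {M : ℝ} (hM : 0 < M)
    (x y : Fin N → ℝ) (hx : ∀ n, x n ∈ Set.Icc (0 : ℝ) M) (hy : ∀ n, y n ∈ Set.Icc (0 : ℝ) M)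
    {δ : ℝ} (hδ0 : 0 < δ) (hδM : δ < M)
    (F : ↥(Kset M x) → ↥(Kset M y))
    (hF : ∀ p q : ↥(Kset M x), |dist p q - dist (F p) (F q)| ≤ 2 * δ)
    (σ : Fin N → Fin N)
    (hσ : ∀ n : Fin N, ∀ p : ↥(Kset M x),
      (p : ℝ × ℝ) ∈ box M n → (F p : ℝ × ℝ) ∈ box M (σ n))
    (τ : Fin N → Fin N)
    (hτ : ∀ n : Fin N,
      (F ⟨pp M x n, pp_mem M x n⟩ : ℝ × ℝ) ∈ ({pp M y (τ n), pm M y (τ n)} : Set (ℝ × ℝ)) ∧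
      (F ⟨pm M x n, pm_mem M x n⟩ : ℝ × ℝ) ∈ ({pp M y (τ n), pm M y (τ n)} : Set (ℝ × ℝ))) :
    ∀ n : Fin N, (τ n : ℕ) = (σ n : ℕ) ∨ (τ n : ℕ) = (σ n : ℕ) + 1 :=
  step6_tau_mem_general hM x y hx hδM F hF σ hσ τ hτ
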